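/- Let G be a connected, locally finite, quasi-transitive graph and let p ∈ [0,1]. If G[p] has a unique infinite cluster P_p-almost surely, then the two-point function is bounded away from zero: inf{τ_p(x,y) : x,y ∈ V} > 0, and in particular lim_{n→∞} κ_p(n) > 0. -/

import Mathlib

open scoped ENNReal


open MeasureTheory Filter Topology

noncomputable section

namespace BernoulliPercolation

variable {V : Type*}

/-- The spanning subgraph of the retained (open) edges of a configuration `ω`:
edge `e` of `G` is retained iff `ω e = true`. -/
def openSubgraph (G : SimpleGraph V) (ω : G.edgeSet → Bool) : SimpleGraph V :=
  SimpleGraph.fromEdgeSet {e : Sym2 V | ∃ he : e ∈ G.edgeSet, ω ⟨e, he⟩ = true}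

/-- The event that `x` and `y` are connected in the percolation configuration. -/
def connEvent (G : SimpleGraph V) (x y : V) : Set (G.edgeSet → Bool) :=
  {ω | (openSubgraph G ω).Reachable x y}

/-- The event that `x` and `y` are joined by an open path of length at most `r`. -/
def connEventLe (G : SimpleGraph V) (x y : V) (r : ℕ) : Set (G.edgeSet → Bool) :=
  {ω | ∃ w : (openSubgraph G ω).Walk x y, w.IsPath ∧ w.length ≤ r}

/-- `μ` is Bernoulli bond percolation on `G` with retention parameter `p`:
the states of the edges are independent, and each edge is retained (open) with
probability `p` and deleted with probability `1 - p`. -/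
def IsBernoulli (G : SimpleGraph V) (p : ℝ) (μ : Measure (G.edgeSet → Bool)) : Prop :=
  ∀ (S : Finset G.edgeSet) (f : G.edgeSet → Bool),
    μ {ω | ∀ e ∈ S, ω e = f e} =
      ∏ e ∈ S, (if f e then ENNReal.ofReal p else ENNReal.ofReal (1 - p))

/-- The two-point (connection) probability `τ(x,y)`. -/
def tau (G : SimpleGraph V) (μ : Measure (G.edgeSet → Bool)) (x y : V) : ℝ :=
  (μ (connEvent G x y)).toReal

/-- `τ^r(x,y)`: the probability that `x` and `y` are joined by an open path of
length at most `r`. -/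
def tauLe (G : SimpleGraph V) (μ : Measure (G.edgeSet → Bool)) (x y : V) (r : ℕ) : ℝ :=
  (μ (connEventLe G x y r)).toReal

/-- `κ(n) = inf {τ(x,y) : d(x,y) ≤ n}`. -/
def kappa (G : SimpleGraph V) (μ : Measure (G.edgeSet → Bool)) (n : ℕ) : ℝ :=
  sInf {t : ℝ | ∃ x y : V, G.dist x y ≤ n ∧ t = tau G μ x y}

/-- The cluster of the vertex `x` in the configuration `ω`. -/
def cluster (G : SimpleGraph V) (ω : G.edgeSet → Bool) (x : V) : Set V :=
  {y | (openSubgraph G ω).Reachable x y}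

/-- The configuration `ω` has no infinite clusters. -/
def NoInfiniteCluster (G : SimpleGraph V) (ω : G.edgeSet → Bool) : Prop :=
  ∀ x : V, (cluster G ω x).Finite

/-- The configuration `ω` has a unique infinite cluster. -/
def UniqueInfiniteCluster (G : SimpleGraph V) (ω : G.edgeSet → Bool) : Prop :=
  ∃! c : (openSubgraph G ω).ConnectedComponent, c.supp.Infinite

/-- The critical probability `p_c`, for a family `μ p` of percolation measures. -/
def pc (G : SimpleGraph V) (μ : ℝ → Measure (G.edgeSet → Bool)) : ℝ :=
  sSup {p : ℝ | p ∈ Set.Icc (0:ℝ) 1 ∧ μ p {ω | NoInfiniteCluster G ω} = 1}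

/-- `G` is quasi-transitive: the action of `Aut(G)` on `V` has finitely many orbits. -/
def QuasiTransitive (G : SimpleGraph V) : Prop :=
  ∃ S : Finset V, ∀ x : V, ∃ y ∈ S, ∃ γ : G ≃g G, γ y = x

/-- The graph-distance ball of radius `r` about `x`. -/
def ball (G : SimpleGraph V) (x : V) (r : ℕ) : Set V :=
  {y : V | G.dist x y ≤ r}

/-- The exponential growth rate `gr(G) = liminf |B(x,r)|^{1/r}` of `G`, seen from `x`. -/
def growth (G : SimpleGraph V) (x : V) : ℝ :=
  Filter.liminf (fun r : ℕ => ((ball G x r).ncard : ℝ) ^ ((r : ℝ)⁻¹)) Filter.atTop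

/-- `G` has exponential growth: `gr(G) > 1`. -/
def ExponentialGrowth (G : SimpleGraph V) : Prop :=
  ∀ x : V, 1 < growth G x

/-- `sup_{n ≥ 1} κ(n)^{1/n}`. -/
def supKappaRoot (G : SimpleGraph V) (μ : Measure (G.edgeSet → Bool)) : ℝ :=
  sSup {t : ℝ | ∃ n : ℕ, 1 ≤ n ∧ t = kappa G μ n ^ ((n : ℝ)⁻¹)}

section GraphAux

variable (G : SimpleGraph V)

lemma edgeSet_openSubgraph (ω : G.edgeSet → Bool) :
    (openSubgraph G ω).edgeSet = {e : Sym2 V | ∃ he : e ∈ G.edgeSet, ω ⟨e, he⟩ = true} := by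
  rw [openSubgraph, SimpleGraph.edgeSet_fromEdgeSet]
  ext e
  simp only [Set.mem_diff, Set.mem_setOf_eq]
  constructor
  · rintro ⟨⟨he, hfe⟩, -⟩; exact ⟨he, hfe⟩
  · rintro ⟨he, hfe⟩
    exact ⟨⟨he, hfe⟩, G.not_isDiag_of_mem_edgeSet he⟩

lemma openSubgraph_le (ω : G.edgeSet → Bool) : openSubgraph G ω ≤ G := by
  intro a b hab
  rw [openSubgraph, SimpleGraph.fromEdgeSet_adj] at hab
  obtain ⟨⟨he, -⟩, -⟩ := hab
  rwa [SimpleGraph.mem_edgeSet] at he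

lemma reachable_open_iff {ω : G.edgeSet → Bool} {x y : V} :
    (openSubgraph G ω).Reachable x y ↔
      ∃ w : G.Walk x y, ∀ e ∈ w.edges, ∃ he : e ∈ G.edgeSet, ω ⟨e, he⟩ = true := by
  constructor
  · rintro ⟨w⟩
    have hsub : (openSubgraph G ω).edgeSet ⊆ G.edgeSet := by
      rw [edgeSet_openSubgraph]; rintro e ⟨he, -⟩; exact he
    refine ⟨w.transfer G (fun e he' => hsub (w.edges_subset_edgeSet he')), fun e he => ?_⟩
    rw [SimpleGraph.Walk.edges_transfer] at he
    have h2 := w.edges_subset_edgeSet he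
    rw [edgeSet_openSubgraph] at h2
    exact h2
  · rintro ⟨w, hw⟩
    refine ⟨w.transfer (openSubgraph G ω) fun e he => ?_⟩
    rw [edgeSet_openSubgraph]
    exact hw e he

lemma walk_support_injective : ∀ {x y : V} (w₁ w₂ : G.Walk x y),
    w₁.support = w₂.support → w₁ = w₂
  | _, _, .nil, .nil, _ => rfl
  | _, _, .nil, .cons h q, hs => by
      simp only [SimpleGraph.Walk.support_nil, SimpleGraph.Walk.support_cons,
        List.cons.injEq, true_and] at hs
      exact absurd hs.symm q.support_ne_nil
  | _, _, .cons h q, .nil, hs => by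
      simp only [SimpleGraph.Walk.support_nil, SimpleGraph.Walk.support_cons,
        List.cons.injEq, true_and] at hs
      exact absurd hs q.support_ne_nil
  | x, y, .cons (v := b₁) h₁ q₁, .cons (v := b₂) h₂ q₂, hs => by
      simp only [SimpleGraph.Walk.support_cons, List.cons.injEq, true_and] at hs
      have hb : b₁ = b₂ := by
        have h1 := q₁.support_eq_cons
        have h2 := q₂.support_eq_cons
        rw [h1, h2] at hs
        exact (List.cons.injEq _ _ _ _).mp hs |>.1
      subst hb
      rw [walk_support_injective q₁ q₂ hs]

instance [Countable V] {x y : V} : Countable (G.Walk x y) :=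
  Function.Injective.countable (f := fun w : G.Walk x y => w.support)
    (fun _ _ h => walk_support_injective G _ _ h)

lemma measurableSet_connEvent [Countable V] (x y : V) :
    MeasurableSet (connEvent G x y) := by
  classical
  have hset : connEvent G x y = ⋃ w : G.Walk x y,
      {ω | ∀ e ∈ w.edges, ∃ he : e ∈ G.edgeSet, ω ⟨e, he⟩ = true} := by
    ext ω
    simp only [connEvent, Set.mem_setOf_eq, Set.mem_iUnion]
    exact reachable_open_iff G
  rw [hset]
  refine MeasurableSet.iUnion fun w => ?_
  have h2 : {ω : G.edgeSet → Bool | ∀ e ∈ w.edges, ∃ he : e ∈ G.edgeSet, ω ⟨e, he⟩ = true}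
      = ⋂ e ∈ {e : Sym2 V | e ∈ w.edges},
          {ω : G.edgeSet → Bool | ∃ he : e ∈ G.edgeSet, ω ⟨e, he⟩ = true} := by
    ext ω; simp
  rw [h2]
  refine MeasurableSet.biInter (Set.to_countable _) fun e _ => ?_
  by_cases h : e ∈ G.edgeSet
  · have h3 : {ω : G.edgeSet → Bool | ∃ he : e ∈ G.edgeSet, ω ⟨e, he⟩ = true}
        = (fun ω : G.edgeSet → Bool => ω ⟨e, h⟩) ⁻¹' {true} := by
      ext ω
      simp only [Set.mem_setOf_eq, Set.mem_preimage, Set.mem_singleton_iff]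
      exact ⟨fun ⟨_, hv⟩ => hv, fun hv => ⟨h, hv⟩⟩
    rw [h3]
    exact measurable_pi_apply _ (measurableSet_singleton true)
  · have h3 : {ω : G.edgeSet → Bool | ∃ he : e ∈ G.edgeSet, ω ⟨e, he⟩ = true} = ∅ := by
      ext ω; simp only [Set.mem_setOf_eq, Set.mem_empty_iff_false, iff_false]
      rintro ⟨he, -⟩; exact h he
    rw [h3]; exact MeasurableSet.empty

end GraphAux


section BallAux

variable (G : SimpleGraph V)

lemma ball_mono (x : V) {r r' : ℕ} (h : r ≤ r') : ball G x r ⊆ ball G x r' :=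
  fun y hy => le_trans hy h

lemma mem_ball_self (x : V) (r : ℕ) : x ∈ ball G x r := by
  simp [ball, SimpleGraph.dist_self]

lemma ball_finite (hconn : G.Connected) (hlf : ∀ v : V, (G.neighborSet v).Finite)
    (x : V) : ∀ r : ℕ, (ball G x r).Finite := by
  intro r
  induction r with
  | zero =>
      refine Set.Finite.subset (Set.finite_singleton x) fun y hy => ?_
      simp only [ball, Set.mem_setOf_eq, Nat.le_zero] at hy
      exact Set.mem_singleton_iff.mpr ((hconn.dist_eq_zero_iff.mp hy)).symm
  | succ r ih =>
      refine Set.Finite.subset (ih.union (Set.Finite.biUnion ih fun v _ => hlf v))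
        fun y hy => ?_
      simp only [ball, Set.mem_setOf_eq] at hy
      by_cases hle : G.dist x y ≤ r
      · exact Or.inl hle
      · have hd : G.dist x y = r + 1 := le_antisymm hy (Nat.succ_le_of_lt (Nat.lt_of_not_le hle))
        obtain ⟨w, hw⟩ := hconn.exists_walk_length_eq_dist x y
        have hnonnil : ¬ w.reverse.Nil := by
          rw [SimpleGraph.Walk.nil_iff_length_eq, SimpleGraph.Walk.length_reverse, hw, hd]
          simp
        obtain ⟨u, hadj, q, hq⟩ := SimpleGraph.Walk.not_nil_iff.mp hnonnil
        have hlen : q.length = r := by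
          have := congrArg SimpleGraph.Walk.length hq
          rw [SimpleGraph.Walk.length_reverse, hw, hd, SimpleGraph.Walk.length_cons] at this
          omega
        have hu : u ∈ ball G x r := by
          have := SimpleGraph.dist_le q.reverse
          simp only [SimpleGraph.Walk.length_reverse, hlen] at this
          exact this
        exact Or.inr (Set.mem_biUnion hu hadj.symm)

lemma countable_of_connected (hconn : G.Connected) (hlf : ∀ v : V, (G.neighborSet v).Finite) :
    Countable V := by
  obtain ⟨x⟩ := hconn.nonempty
  have hsub : (Set.univ : Set V) ⊆ ⋃ r : ℕ, ball G x r :=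
    fun y _ => Set.mem_iUnion.mpr ⟨G.dist x y, by simp [ball]⟩
  have hc : (Set.univ : Set V).Countable :=
    Set.Countable.mono hsub (Set.countable_iUnion fun r => (ball_finite G hconn hlf x r).countable)
  exact Set.countable_univ_iff.mp hc

lemma infinite_iff_not_in_ball (hconn : G.Connected) (hlf : ∀ v : V, (G.neighborSet v).Finite)
    (x₀ : V) (s : Set V) :
    s.Infinite ↔ ∀ r : ℕ, ∃ v ∈ s, v ∉ ball G x₀ r := by
  constructor
  · intro hinf r
    by_contra h
    push_neg at h
    exact hinf (Set.Finite.subset (ball_finite G hconn hlf x₀ r) fun v hv => by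
      by_contra hb; exact hb (h v hv))
  · intro h hfin
    classical
    set R := hfin.toFinset.sup (G.dist x₀) with hR
    obtain ⟨v, hv, hvb⟩ := h R
    refine hvb ?_
    have : v ∈ hfin.toFinset := hfin.mem_toFinset.mpr hv
    exact Finset.le_sup (f := G.dist x₀) this

lemma measurableSet_infCluster [Countable V] (hconn : G.Connected)
    (hlf : ∀ v : V, (G.neighborSet v).Finite) (u : V) :
    MeasurableSet {ω : G.edgeSet → Bool | (cluster G ω u).Infinite} := by
  obtain ⟨x₀⟩ := hconn.nonempty
  have hset : {ω : G.edgeSet → Bool | (cluster G ω u).Infinite}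
      = ⋂ r : ℕ, ⋃ v : V, ⋃ (_ : v ∉ ball G x₀ r), connEvent G u v := by
    ext ω
    simp only [Set.mem_setOf_eq, Set.mem_iInter, Set.mem_iUnion,
      infinite_iff_not_in_ball G hconn hlf x₀]
    constructor
    · intro h r
      obtain ⟨v, hv, hvb⟩ := h r
      exact ⟨v, hvb, hv⟩
    · intro h r
      obtain ⟨v, hvb, hv⟩ := h r
      exact ⟨v, hv, hvb⟩
  rw [hset]
  exact MeasurableSet.iInter fun r => MeasurableSet.iUnion fun v =>
    MeasurableSet.iUnion fun _ => measurableSet_connEvent G u v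

end BallAux

section MeasureAux

variable (G : SimpleGraph V)

/-- Point cylinder: the event that the configuration agrees with `f` on `S`. -/
def pointCyl (S : Finset G.edgeSet) (f : G.edgeSet → Bool) : Set (G.edgeSet → Bool) :=
  {ω | ∀ e ∈ S, ω e = f e}

lemma measurableSet_pointCyl (S : Finset G.edgeSet) (f : G.edgeSet → Bool) :
    MeasurableSet (pointCyl G S f) := by
  have : pointCyl G S f = ⋂ e ∈ S, (fun ω : G.edgeSet → Bool => ω e) ⁻¹' {f e} := by
    ext ω; simp [pointCyl]
  rw [this]
  exact MeasurableSet.biInter S.countable_toSet fun e _ =>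
    measurable_pi_apply e (measurableSet_singleton _)

lemma pointCyl_empty (f : G.edgeSet → Bool) : pointCyl G ∅ f = Set.univ := by
  ext ω; simp [pointCyl]

variable {G}

lemma IsBernoulli.apply_pointCyl {p : ℝ} {μ : Measure (G.edgeSet → Bool)}
    (hμ : IsBernoulli G p μ) (S : Finset G.edgeSet) (f : G.edgeSet → Bool) :
    μ (pointCyl G S f) =
      ∏ e ∈ S, (if f e then ENNReal.ofReal p else ENNReal.ofReal (1 - p)) :=
  hμ S f

lemma IsBernoulli.isProbabilityMeasure {p : ℝ} {μ : Measure (G.edgeSet → Bool)}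
    (hμ : IsBernoulli G p μ) : IsProbabilityMeasure μ := by
  constructor
  have := hμ.apply_pointCyl ∅ (fun _ => true)
  rwa [pointCyl_empty, Finset.prod_empty] at this

/-- Two finite measures agreeing on all point cylinders are equal. -/
lemma measure_ext_of_pointCyl {ν₁ ν₂ : Measure (G.edgeSet → Bool)} [IsFiniteMeasure ν₁]
    (h : ∀ S f, ν₁ (pointCyl G S f) = ν₂ (pointCyl G S f)) : ν₁ = ν₂ := by
  classical
  have huniv : ν₁ Set.univ = ν₂ Set.univ := by
    have := h ∅ (fun _ => true); rwa [pointCyl_empty] at this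
  refine ext_of_generate_finite _ generateFrom_measurableCylinders.symm
    isPiSystem_measurableCylinders ?_ huniv
  intro t ht
  obtain ⟨s, S, hS, rfl⟩ := (mem_measurableCylinders t).mp ht
  have hSfin : S.Finite := S.toFinite
  set T : Finset ((i : s) → Bool) := hSfin.toFinset with hT
  have key : cylinder s S = ⋃ g ∈ T,
      pointCyl G s (fun e => if he : e ∈ s then g ⟨e, he⟩ else false) := by
    ext ω
    simp only [mem_cylinder, Set.mem_iUnion, hT, Set.Finite.mem_toFinset]
    constructor
    · intro hω
      refine ⟨fun i => ω i, hω, ?_⟩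
      intro e he
      simp [he]
    · rintro ⟨g, hg, hωg⟩
      have : (fun i : s => ω i) = g := by
        funext i
        have := hωg i i.2
        simpa [i.2] using this
      exact (show s.restrict ω = g from this) ▸ hg
  have hdisj : ∀ g₁ ∈ T, ∀ g₂ ∈ T, g₁ ≠ g₂ →
      Disjoint (pointCyl G s (fun e => if he : e ∈ s then g₁ ⟨e, he⟩ else false))
        (pointCyl G s (fun e => if he : e ∈ s then g₂ ⟨e, he⟩ else false)) := by
    intro g₁ _ g₂ _ hne
    rw [Set.disjoint_left]
    intro ω h1 h2
    refine hne (funext fun i => ?_)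
    have e1 := h1 i i.2
    have e2 := h2 i i.2
    simp only [i.2, dif_pos] at e1 e2
    rw [← e1, ← e2]
  rw [key]
  rw [measure_biUnion_finset (fun g₁ hg₁ g₂ hg₂ hne => hdisj g₁ hg₁ g₂ hg₂ hne)
      (fun g _ => measurableSet_pointCyl G _ _),
    measure_biUnion_finset (fun g₁ hg₁ g₂ hg₂ hne => hdisj g₁ hg₁ g₂ hg₂ hne)
      (fun g _ => measurableSet_pointCyl G _ _)]
  exact Finset.sum_congr rfl fun g _ => h _ _

/-- the product measure determined by `IsBernoulli` is unique -/
lemma IsBernoulli.unique {p : ℝ} {ν₁ ν₂ : Measure (G.edgeSet → Bool)}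
    (h₁ : IsBernoulli G p ν₁) (h₂ : IsBernoulli G p ν₂) : ν₁ = ν₂ := by
  have := h₁.isProbabilityMeasure
  exact measure_ext_of_pointCyl fun S f => by rw [h₁.apply_pointCyl, h₂.apply_pointCyl]

open scoped Classical in
/-- Force all edges of `F` open. -/
def forceOpen (G : SimpleGraph V) (F : Finset G.edgeSet) (ω : G.edgeSet → Bool) :
    G.edgeSet → Bool :=
  fun e => if e ∈ F then true else ω e

lemma measurable_forceOpen (F : Finset G.edgeSet) : Measurable (forceOpen G F) := by
  classical
  refine measurable_pi_lambda _ fun e => ?_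
  by_cases h : e ∈ F
  · simp only [forceOpen, h, if_true]
    exact measurable_const
  · simp only [forceOpen, h, if_false]
    exact measurable_pi_apply e

lemma forceOpen_idem (F : Finset G.edgeSet) (ω : G.edgeSet → Bool) :
    forceOpen G F (forceOpen G F ω) = forceOpen G F ω := by
  funext e; by_cases h : e ∈ F <;> simp [forceOpen, h]

/-- The key independence lemma: if `C` is measurable and insensitive to the states of the
edges in `F`, then forcing `F` open is independent of `C`. -/
lemma IsBernoulli.measure_open_inter {p : ℝ} {μ : Measure (G.edgeSet → Bool)}
    (hμ : IsBernoulli G p μ) (F : Finset G.edgeSet) {C : Set (G.edgeSet → Bool)}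
    (hC : MeasurableSet C) (hins : forceOpen G F ⁻¹' C = C) :
    μ (pointCyl G F (fun _ => true) ∩ C) = ENNReal.ofReal p ^ F.card * μ C := by
  classical
  have hprob := hμ.isProbabilityMeasure
  set q : ℝ≥0∞ := ENNReal.ofReal p with hq
  set Φ := forceOpen G F with hΦ
  have hΦm : Measurable Φ := measurable_forceOpen F
  set ν₁ : Measure (G.edgeSet → Bool) :=
    Measure.map Φ (μ.restrict (pointCyl G F (fun _ => true))) with hν₁
  set ν₂ : Measure (G.edgeSet → Bool) := (q ^ F.card) • Measure.map Φ μ with hν₂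
  have hfin : IsFiniteMeasure ν₁ := by
    constructor
    rw [hν₁, Measure.map_apply hΦm MeasurableSet.univ]
    exact lt_of_le_of_lt (le_trans (Measure.restrict_le_self _) (measure_mono (Set.subset_univ _)))
      (by simp [measure_lt_top])
  have hkey : ν₁ = ν₂ := by
    refine measure_ext_of_pointCyl fun S f => ?_
    have hpre : Φ ⁻¹' pointCyl G S f =
        if ∀ e ∈ S, e ∈ F → f e = true then pointCyl G (S \ F) f else ∅ := by
      split_ifs with hcompat
      · ext ω
        simp only [Set.mem_preimage, pointCyl, Set.mem_setOf_eq, hΦ, forceOpen,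
          Finset.mem_sdiff]
        constructor
        · intro h e ⟨heS, heF⟩
          have := h e heS
          simpa [heF] using this
        · intro h e heS
          by_cases heF : e ∈ F
          · simp [heF, (hcompat e heS heF).symm]
          · simpa [heF] using h e ⟨heS, heF⟩
      · push_neg at hcompat
        obtain ⟨e, heS, heF, hfe⟩ := hcompat
        ext ω
        simp only [Set.mem_preimage, pointCyl, Set.mem_setOf_eq, Set.mem_empty_iff_false,
          iff_false, not_forall]
        refine ⟨e, heS, ?_⟩
        simp only [hΦ, forceOpen, heF, if_true]
        exact fun h => hfe h.symm
    have hv1 : ν₁ (pointCyl G S f) =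
        μ (Φ ⁻¹' pointCyl G S f ∩ pointCyl G F (fun _ => true)) := by
      rw [hν₁, Measure.map_apply hΦm (measurableSet_pointCyl G S f),
        Measure.restrict_apply (hΦm (measurableSet_pointCyl G S f))]
    have hv2 : ν₂ (pointCyl G S f) = q ^ F.card * μ (Φ ⁻¹' pointCyl G S f) := by
      rw [hν₂, Measure.smul_apply, smul_eq_mul,
        Measure.map_apply hΦm (measurableSet_pointCyl G S f)]
    rw [hv1, hv2, hpre]
    split_ifs with hcompat
    · -- combine into one cylinder on F ∪ (S \ F)
      set g : G.edgeSet → Bool := fun e => if e ∈ F then true else f e with hg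
      have hcomb : pointCyl G (S \ F) f ∩ pointCyl G F (fun _ => true)
          = pointCyl G (F ∪ (S \ F)) g := by
        ext ω
        simp only [pointCyl, Set.mem_inter_iff, Set.mem_setOf_eq, Finset.mem_union,
          Finset.mem_sdiff, hg]
        constructor
        · rintro ⟨h1, h2⟩ e he
          rcases he with heF | ⟨heS, heF⟩
          · simp [heF, h2 e heF]
          · simp [heF, h1 e ⟨heS, heF⟩]
        · intro h
          constructor
          · intro e ⟨heS, heF⟩
            have := h e (Or.inr ⟨heS, heF⟩)
            simpa [heF] using this
          · intro e heF
            have := h e (Or.inl heF)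
            simpa [heF] using this
      rw [hcomb, hμ.apply_pointCyl, hμ.apply_pointCyl,
        Finset.prod_union (Finset.disjoint_sdiff)]
      have hF : (∏ e ∈ F, (if g e then ENNReal.ofReal p else ENNReal.ofReal (1 - p)))
          = q ^ F.card := by
        calc (∏ e ∈ F, (if g e then ENNReal.ofReal p else ENNReal.ofReal (1 - p)))
            = ∏ _e ∈ F, q := Finset.prod_congr rfl fun e heF => by simp [hg, heF, hq]
          _ = q ^ F.card := Finset.prod_const q
      have hSF : (∏ e ∈ S \ F, (if g e then ENNReal.ofReal p else ENNReal.ofReal (1 - p)))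
          = ∏ e ∈ S \ F, (if f e then ENNReal.ofReal p else ENNReal.ofReal (1 - p)) :=
        Finset.prod_congr rfl fun e he => by
          have heF : e ∉ F := (Finset.mem_sdiff.mp he).2
          simp [hg, heF]
      rw [hF, hSF]
    · simp
  -- conclude
  have h1 : μ (pointCyl G F (fun _ => true) ∩ C) = ν₁ C := by
    rw [hν₁, Measure.map_apply hΦm hC, Measure.restrict_apply (hΦm hC), hins, Set.inter_comm]
  have h2 : ν₂ C = q ^ F.card * μ C := by
    rw [hν₂, Measure.smul_apply, smul_eq_mul, Measure.map_apply hΦm hC, hins]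
  rw [h1, hkey, h2]

end MeasureAux

section AutAux

variable {G : SimpleGraph V}

/-- The action of a graph automorphism on percolation configurations. -/
def autMap (γ : G ≃g G) (ω : G.edgeSet → Bool) : G.edgeSet → Bool :=
  fun e => ω (γ.mapEdgeSet e)

lemma measurable_autMap (γ : G ≃g G) : Measurable (autMap γ) :=
  measurable_pi_lambda _ fun e => measurable_pi_apply _

open scoped Classical in
lemma autMap_preimage_pointCyl (γ : G ≃g G) (S : Finset G.edgeSet) (f : G.edgeSet → Bool) :
    autMap γ ⁻¹' pointCyl G S f
      = pointCyl G (S.image γ.mapEdgeSet) (f ∘ γ.mapEdgeSet.symm) := by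
  classical
  ext ω
  simp only [Set.mem_preimage, pointCyl, Set.mem_setOf_eq, autMap, Finset.mem_image,
    Function.comp_apply]
  constructor
  · rintro h e ⟨e', he', rfl⟩
    rw [Equiv.symm_apply_apply]
    exact h e' he'
  · intro h e he
    have := h (γ.mapEdgeSet e) ⟨e, he, rfl⟩
    rwa [Equiv.symm_apply_apply] at this

lemma IsBernoulli.map_autMap {p : ℝ} {μ : Measure (G.edgeSet → Bool)}
    (hμ : IsBernoulli G p μ) (γ : G ≃g G) :
    Measure.map (autMap γ) μ = μ := by
  classical
  have hb : IsBernoulli G p (Measure.map (autMap γ) μ) := by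
    intro S f
    have h1 : Measure.map (autMap γ) μ (pointCyl G S f)
        = μ (autMap γ ⁻¹' pointCyl G S f) :=
      Measure.map_apply (measurable_autMap γ) (measurableSet_pointCyl G S f)
    rw [show {ω | ∀ e ∈ S, ω e = f e} = pointCyl G S f from rfl, h1,
      autMap_preimage_pointCyl, hμ.apply_pointCyl,
      Finset.prod_image (fun a _ b _ h => γ.mapEdgeSet.injective h)]
    exact Finset.prod_congr rfl fun e _ => by
      simp only [Function.comp_apply, Equiv.symm_apply_apply]
  have := hμ.isProbabilityMeasure
  have h2 : IsProbabilityMeasure (Measure.map (autMap γ) μ) := hb.isProbabilityMeasure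
  exact hb.unique hμ

lemma openSubgraph_autMap_adj (γ : G ≃g G) (ω : G.edgeSet → Bool) (a b : V) :
    (openSubgraph G (autMap γ ω)).Adj a b ↔ (openSubgraph G ω).Adj (γ a) (γ b) := by
  rw [openSubgraph, openSubgraph, SimpleGraph.fromEdgeSet_adj, SimpleGraph.fromEdgeSet_adj]
  simp only [Set.mem_setOf_eq]
  constructor
  · rintro ⟨⟨he, hω⟩, hab⟩
    have hmem : s(γ a, γ b) ∈ G.edgeSet := by
      rw [SimpleGraph.mem_edgeSet] at he ⊢
      exact γ.map_adj_iff.mpr he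
    refine ⟨⟨hmem, ?_⟩, fun h => hab (γ.injective h)⟩
    have hval : γ.mapEdgeSet ⟨s(a, b), he⟩ = ⟨s(γ a, γ b), hmem⟩ := by
      apply Subtype.ext
      simp [SimpleGraph.Iso.mapEdgeSet, SimpleGraph.Hom.mapEdgeSet, Sym2.map_pair_eq]
    rw [autMap] at hω
    rwa [hval] at hω
  · rintro ⟨⟨he, hω⟩, hab⟩
    have hmem : s(a, b) ∈ G.edgeSet := by
      rw [SimpleGraph.mem_edgeSet] at he ⊢
      exact γ.map_adj_iff.mp he
    refine ⟨⟨hmem, ?_⟩, fun h => hab (congrArg γ h)⟩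
    show ω (γ.mapEdgeSet ⟨s(a, b), hmem⟩) = true
    have hval : γ.mapEdgeSet ⟨s(a, b), hmem⟩ = ⟨s(γ a, γ b), he⟩ := by
      apply Subtype.ext
      simp [SimpleGraph.Iso.mapEdgeSet, SimpleGraph.Hom.mapEdgeSet, Sym2.map_pair_eq]
    rwa [hval]

/-- The open subgraph of `autMap γ ω` is isomorphic (via `γ`) to the open subgraph of `ω`. -/
def openSubgraphAutIso (γ : G ≃g G) (ω : G.edgeSet → Bool) :
    openSubgraph G (autMap γ ω) ≃g openSubgraph G ω where
  toEquiv := γ.toEquiv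
  map_rel_iff' := by
    intro a b
    exact (openSubgraph_autMap_adj γ ω a b).symm

lemma autMap_reachable_iff (γ : G ≃g G) (ω : G.edgeSet → Bool) (x y : V) :
    (openSubgraph G (autMap γ ω)).Reachable x y ↔ (openSubgraph G ω).Reachable (γ x) (γ y) := by
  constructor
  · intro h
    exact h.map (openSubgraphAutIso γ ω).toHom
  · intro h
    obtain ⟨w⟩ := h
    exact ⟨(w.map (openSubgraphAutIso γ ω).symm.toHom).copy
      (Equiv.symm_apply_apply γ.toEquiv x) (Equiv.symm_apply_apply γ.toEquiv y)⟩

lemma autMap_preimage_connEvent (γ : G ≃g G) (x y : V) :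
    autMap γ ⁻¹' connEvent G x y = connEvent G (γ x) (γ y) := by
  ext ω
  simp only [Set.mem_preimage, connEvent, Set.mem_setOf_eq]
  exact autMap_reachable_iff γ ω x y

lemma cluster_autMap (γ : G ≃g G) (ω : G.edgeSet → Bool) (u : V) :
    cluster G (autMap γ ω) u = γ ⁻¹' cluster G ω (γ u) := by
  ext y
  simp only [cluster, Set.mem_setOf_eq, Set.mem_preimage]
  exact autMap_reachable_iff γ ω u y

lemma autMap_preimage_infCluster (γ : G ≃g G) (u : V) :
    autMap γ ⁻¹' {ω : G.edgeSet → Bool | (cluster G ω u).Infinite}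
      = {ω : G.edgeSet → Bool | (cluster G ω (γ u)).Infinite} := by
  ext ω
  simp only [Set.mem_preimage, Set.mem_setOf_eq, cluster_autMap]
  constructor
  · intro h
    have := h.image γ.injective.injOn
    rwa [Set.image_preimage_eq _ γ.surjective] at this
  · intro h
    intro hfin
    exact h (by simpa [Set.image_preimage_eq _ γ.surjective] using hfin.image γ)

lemma dist_autIso (hconn : G.Connected) (γ : G ≃g G) (x y : V) :
    G.dist (γ x) (γ y) = G.dist x y := by
  have key : ∀ (δ : G ≃g G) (a b : V), G.dist (δ a) (δ b) ≤ G.dist a b := by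
    intro δ a b
    obtain ⟨w, hw⟩ := hconn.exists_walk_length_eq_dist a b
    have := SimpleGraph.dist_le (w.map δ.toHom)
    rwa [SimpleGraph.Walk.length_map, hw] at this
  refine le_antisymm (key γ x y) ?_
  have := key γ.symm (γ x) (γ y)
  simpa using this

lemma ball_autIso (hconn : G.Connected) (γ : G ≃g G) (x : V) (r : ℕ) :
    ball G (γ x) r = γ '' ball G x r := by
  ext y
  simp only [ball, Set.mem_setOf_eq, Set.mem_image]
  constructor
  · intro h
    refine ⟨γ.symm y, ?_, by simp⟩
    have : G.dist (γ x) (γ (γ.symm y)) = G.dist x (γ.symm y) := dist_autIso hconn γ _ _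
    simp only [RelIso.apply_symm_apply] at this
    rwa [← this]
  · rintro ⟨z, hz, rfl⟩
    rw [dist_autIso hconn γ]
    exact hz

end AutAux

section MainAux

variable {G : SimpleGraph V}

lemma cluster_eq_supp (ω : G.edgeSet → Bool) (u : V) :
    cluster G ω u = ((openSubgraph G ω).connectedComponentMk u).supp := by
  ext y
  simp only [cluster, Set.mem_setOf_eq, SimpleGraph.ConnectedComponent.mem_supp_iff]
  constructor
  · intro h; exact SimpleGraph.ConnectedComponent.sound h.symm
  · intro h; exact (SimpleGraph.ConnectedComponent.exact h).symm

variable (G) in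
/-- The event that some vertex within distance `r` of `x` lies in an infinite cluster. -/
def ballInfEvent (x : V) (r : ℕ) : Set (G.edgeSet → Bool) :=
  ⋃ u : V, ⋃ (_ : u ∈ ball G x r), {ω : G.edgeSet → Bool | (cluster G ω u).Infinite}

lemma measurableSet_ballInfEvent [Countable V] (hconn : G.Connected)
    (hlf : ∀ v : V, (G.neighborSet v).Finite) (x : V) (r : ℕ) :
    MeasurableSet (ballInfEvent G x r) :=
  MeasurableSet.iUnion fun u => MeasurableSet.iUnion fun _ =>
    measurableSet_infCluster G hconn hlf u

lemma ballInfEvent_mono (x : V) {r r' : ℕ} (h : r ≤ r') :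
    ballInfEvent G x r ⊆ ballInfEvent G x r' :=
  Set.iUnion₂_mono' fun u hu => ⟨u, ball_mono G x h hu, subset_rfl⟩

lemma autMap_preimage_ballInfEvent (hconn : G.Connected) (γ : G ≃g G) (x : V) (r : ℕ) :
    autMap γ ⁻¹' ballInfEvent G x r = ballInfEvent G (γ x) r := by
  rw [ballInfEvent]
  simp only [Set.preimage_iUnion, autMap_preimage_infCluster]
  ext ω
  simp only [Set.mem_iUnion, Set.mem_setOf_eq, ballInfEvent]
  constructor
  · rintro ⟨u, hu, h⟩
    exact ⟨γ u, by rw [ball_autIso hconn]; exact ⟨u, hu, rfl⟩, h⟩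
  · rintro ⟨w, hw, h⟩
    rw [ball_autIso hconn] at hw
    obtain ⟨u, hu, rfl⟩ := hw
    exact ⟨u, hu, h⟩

lemma measure_ballInfEvent_autMap [Countable V] (hconn : G.Connected)
    (hlf : ∀ v : V, (G.neighborSet v).Finite) {p : ℝ} {μ : Measure (G.edgeSet → Bool)}
    (hμ : IsBernoulli G p μ) (γ : G ≃g G) (x : V) (r : ℕ) :
    μ (ballInfEvent G (γ x) r) = μ (ballInfEvent G x r) := by
  rw [← autMap_preimage_ballInfEvent hconn γ x r,
    ← Measure.map_apply (measurable_autMap γ) (measurableSet_ballInfEvent hconn hlf x r),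
    hμ.map_autMap γ]

lemma p_pos [Countable V] {p : ℝ} {μ : Measure (G.edgeSet → Bool)}
    (hμ : IsBernoulli G p μ)
    (hunique : μ {ω | UniqueInfiniteCluster G ω} = 1) : 0 < p := by
  by_contra h
  push_neg at h
  have hsub : {ω : G.edgeSet → Bool | UniqueInfiniteCluster G ω}
      ⊆ ⋃ e : G.edgeSet, {ω | ω e = true} := by
    intro ω hω
    obtain ⟨c, hc, -⟩ := hω
    obtain ⟨u, hu⟩ := hc.nonempty
    obtain ⟨v, hv⟩ := (hc.diff (Set.finite_singleton u)).nonempty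
    have hr : (openSubgraph G ω).Reachable u v := by
      have h1 := (SimpleGraph.ConnectedComponent.mem_supp_iff c u).mp hu
      have h2 := (SimpleGraph.ConnectedComponent.mem_supp_iff c v).mp hv.1
      exact SimpleGraph.ConnectedComponent.exact (h1.trans h2.symm)
    have hvu : v ≠ u := hv.2
    obtain ⟨w⟩ := hr
    have hlen : w.length ≠ 0 := fun h0 =>
      hvu (SimpleGraph.Walk.eq_of_length_eq_zero h0).symm
    have hedges : w.edges ≠ [] := by
      intro h0
      apply hlen
      rw [← SimpleGraph.Walk.length_edges, h0]
      rfl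
    obtain ⟨e, he⟩ := List.exists_mem_of_ne_nil w.edges hedges
    have he2 := w.edges_subset_edgeSet he
    rw [edgeSet_openSubgraph] at he2
    obtain ⟨heG, het⟩ := he2
    exact Set.mem_iUnion.mpr ⟨⟨e, heG⟩, het⟩
  have hzero : μ (⋃ e : G.edgeSet, {ω | ω e = true}) = 0 := by
    refine measure_iUnion_null fun e => ?_
    have hpc := hμ.apply_pointCyl {e} (fun _ => true)
    have hpt : pointCyl G {e} (fun _ => true) = {ω : G.edgeSet → Bool | ω e = true} := by
      ext ω; simp [pointCyl]
    rw [hpt] at hpc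
    rw [hpc]
    simp [ENNReal.ofReal_eq_zero.mpr h]
  have hle := le_trans (le_of_eq hunique.symm) (le_trans (measure_mono hsub) (le_of_eq hzero))
  simp at hle

lemma exists_ballInfEvent_ge [Countable V] (hconn : G.Connected)
    (hlf : ∀ v : V, (G.neighborSet v).Finite) {p : ℝ} {μ : Measure (G.edgeSet → Bool)}
    (hμ : IsBernoulli G p μ)
    (hunique : μ {ω | UniqueInfiniteCluster G ω} = 1) (x : V) :
    ∃ r : ℕ, (3/4 : ℝ≥0∞) ≤ μ (ballInfEvent G x r) := by
  have := hμ.isProbabilityMeasure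
  have hsub : {ω : G.edgeSet → Bool | UniqueInfiniteCluster G ω}
      ⊆ ⋃ r : ℕ, ballInfEvent G x r := by
    intro ω hω
    obtain ⟨c, hc, -⟩ := hω
    obtain ⟨u, hu⟩ := hc.nonempty
    have hcl : (cluster G ω u).Infinite := by
      rw [cluster_eq_supp, (SimpleGraph.ConnectedComponent.mem_supp_iff c u).mp hu]
      exact hc
    refine Set.mem_iUnion.mpr ⟨G.dist x u, ?_⟩
    exact Set.mem_iUnion.mpr ⟨u, Set.mem_iUnion.mpr ⟨by simp [ball], hcl⟩⟩
  have hdir : Directed (· ⊆ ·) (fun r : ℕ => ballInfEvent G x r) :=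
    (monotone_nat_of_le_succ fun r => ballInfEvent_mono x (Nat.le_succ r)).directed_le
  have h1 : (1 : ℝ≥0∞) ≤ ⨆ r : ℕ, μ (ballInfEvent G x r) := by
    rw [← Directed.measure_iUnion hdir]
    calc (1 : ℝ≥0∞) = μ {ω | UniqueInfiniteCluster G ω} := hunique.symm
      _ ≤ _ := measure_mono hsub
  have h2 : (3/4 : ℝ≥0∞) < ⨆ r : ℕ, μ (ballInfEvent G x r) :=
    lt_of_lt_of_le (by rw [ENNReal.div_lt_iff (by norm_num) (by norm_num)]; norm_num) h1
  obtain ⟨r, hr⟩ := lt_iSup_iff.mp h2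
  exact ⟨r, le_of_lt hr⟩

lemma measure_le_measure_inter_ae {α : Type*} {m : MeasurableSpace α} {μ : Measure α}
    [IsProbabilityMeasure μ] {A U : Set α} (hA : MeasurableSet A) (hU : μ U = 1) :
    μ A ≤ μ (A ∩ U) := by
  have h1 : μ U ≤ μ (U ∩ A) + μ (U ∩ Aᶜ) := by
    refine le_trans (measure_mono fun z hz => ?_) (measure_union_le _ _)
    by_cases h : z ∈ A
    · exact Or.inl ⟨hz, h⟩
    · exact Or.inr ⟨hz, h⟩
  have h2 : μ (U ∩ Aᶜ) ≤ μ Aᶜ := measure_mono Set.inter_subset_right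
  have h3 : μ Aᶜ = 1 - μ A := prob_compl_eq_one_sub hA
  have h4 : (1 : ℝ≥0∞) ≤ μ (U ∩ A) + (1 - μ A) := by
    rw [← h3, ← hU]
    exact le_trans h1 (add_le_add le_rfl h2)
  have h6 : (1 : ℝ≥0∞) - (1 - μ A) ≤ μ (U ∩ A) := tsub_le_iff_right.mpr h4
  rwa [ENNReal.sub_sub_cancel ENNReal.one_ne_top prob_le_one, Set.inter_comm] at h6

end MainAux

section CoreAux

variable {G : SimpleGraph V}

lemma infEvent_inter_unique_subset_connEvent (u v : V) :
    ({ω : G.edgeSet → Bool | (cluster G ω u).Infinite}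
        ∩ {ω : G.edgeSet → Bool | (cluster G ω v).Infinite})
      ∩ {ω : G.edgeSet → Bool | UniqueInfiniteCluster G ω} ⊆ connEvent G u v := by
  rintro ω ⟨⟨hu, hv⟩, hω⟩
  obtain ⟨c, -, huniq⟩ := hω
  have h1 : ((openSubgraph G ω).connectedComponentMk u).supp.Infinite := by
    rwa [← cluster_eq_supp]
  have h2 : ((openSubgraph G ω).connectedComponentMk v).supp.Infinite := by
    rwa [← cluster_eq_supp]
  exact SimpleGraph.ConnectedComponent.exact ((huniq _ h1).trans (huniq _ h2).symm)

lemma exists_tau_lower_bound (hconn : G.Connected)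
    (hlf : ∀ v : V, (G.neighborSet v).Finite) (hqt : QuasiTransitive G)
    {p : ℝ} (hp : p ∈ Set.Icc (0:ℝ) 1) {μ : Measure (G.edgeSet → Bool)}
    (hμ : IsBernoulli G p μ)
    (hunique : μ {ω | UniqueInfiniteCluster G ω} = 1) :
    ∃ c : ℝ, 0 < c ∧ ∀ x y : V, c ≤ tau G μ x y := by
  classical
  haveI : Countable V := countable_of_connected G hconn hlf
  haveI := hμ.isProbabilityMeasure
  have hppos : 0 < p := p_pos hμ hunique
  obtain ⟨S, hS⟩ := hqt
  have hex : ∀ s : V, ∃ r : ℕ, (3/4 : ℝ≥0∞) ≤ μ (ballInfEvent G s r) := fun s =>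
    exists_ballInfEvent_ge hconn hlf hμ hunique s
  set R : ℕ := S.sup fun s => (hex s).choose with hR
  have hAx : ∀ x : V, (3/4 : ℝ≥0∞) ≤ μ (ballInfEvent G x R) := by
    intro x
    obtain ⟨s, hsS, γ, rfl⟩ := hS x
    rw [measure_ballInfEvent_autMap hconn hlf hμ γ s R]
    exact le_trans (hex s).choose_spec
      (measure_mono (ballInfEvent_mono s (Finset.le_sup (f := fun s => (hex s).choose) hsS)))
  set N : ℕ := S.sup fun s => (ball G s R).ncard with hN
  have hNx : ∀ x : V, (ball G x R).ncard ≤ N := by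
    intro x
    obtain ⟨s, hsS, γ, rfl⟩ := hS x
    rw [ball_autIso hconn γ, Set.ncard_image_of_injective _ γ.injective]
    exact Finset.le_sup (f := fun s => (ball G s R).ncard) hsS
  set q : ℝ≥0∞ := ENNReal.ofReal p with hq
  set c₀ : ℝ≥0∞ := q ^ (2 * R) * ((3 : ℝ≥0∞) * (N : ℝ≥0∞) ^ 2)⁻¹ with hc₀
  have hq0 : q ≠ 0 := by
    simp only [hq, ne_eq, ENNReal.ofReal_eq_zero, not_le]
    exact hppos
  have hq1 : q ≤ 1 := ENNReal.ofReal_le_one.mpr hp.2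
  have hN1 : 1 ≤ N := by
    obtain ⟨x₀⟩ := hconn.nonempty
    obtain ⟨s, hsS, γ, -⟩ := hS x₀
    refine le_trans ?_ (Finset.le_sup (f := fun s => (ball G s R).ncard) hsS)
    exact (Set.ncard_pos (ball_finite G hconn hlf s R)).mpr ⟨s, mem_ball_self G s R⟩
  have hNne : ((3 : ℝ≥0∞) * (N : ℝ≥0∞) ^ 2) ≠ 0 :=
    mul_ne_zero (by norm_num) (pow_ne_zero 2 (Nat.cast_ne_zero.mpr (by omega)))
  have hNtop : ((3 : ℝ≥0∞) * (N : ℝ≥0∞) ^ 2) ≠ ⊤ :=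
    ENNReal.mul_ne_top (by norm_num) (ENNReal.pow_ne_top (ENNReal.natCast_ne_top N))
  have hc₀pos : 0 < c₀ := by
    rw [hc₀]
    refine ENNReal.mul_pos (pow_ne_zero _ hq0) ?_
    simp only [ne_eq, ENNReal.inv_eq_zero]
    exact hNtop
  have hc₀top : c₀ ≠ ⊤ := by
    rw [hc₀]
    refine ENNReal.mul_ne_top (ENNReal.pow_ne_top ENNReal.ofReal_ne_top) ?_
    simp only [ne_eq, ENNReal.inv_eq_top]
    exact hNne
  refine ⟨c₀.toReal, ENNReal.toReal_pos (ne_of_gt hc₀pos) hc₀top, fun x y => ?_⟩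
  have hfx := ball_finite G hconn hlf x R
  have hfy := ball_finite G hconn hlf y R
  set I : Finset (V × V) := hfx.toFinset ×ˢ hfy.toFinset with hI
  set g : V × V → ℝ≥0∞ := fun uv =>
    μ ({ω : G.edgeSet → Bool | (cluster G ω uv.1).Infinite}
      ∩ {ω : G.edgeSet → Bool | (cluster G ω uv.2).Infinite}) with hg
  have hmeasx := measurableSet_ballInfEvent hconn hlf x R
  have hmeasy := measurableSet_ballInfEvent hconn hlf y R
  have hcap : (1/2 : ℝ≥0∞) ≤ μ (ballInfEvent G x R ∩ ballInfEvent G y R) := by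
    have hquarter : (1:ℝ≥0∞) - 3/4 ≤ 1/4 := by
      rw [tsub_le_iff_right, ENNReal.div_add_div_same]
      norm_num [ENNReal.div_self]
    have hcx : μ (ballInfEvent G x R)ᶜ ≤ 1/4 := by
      rw [prob_compl_eq_one_sub hmeasx]
      exact le_trans (tsub_le_tsub_left (hAx x) 1) hquarter
    have hcy : μ (ballInfEvent G y R)ᶜ ≤ 1/4 := by
      rw [prob_compl_eq_one_sub hmeasy]
      exact le_trans (tsub_le_tsub_left (hAx y) 1) hquarter
    have hcup : μ (ballInfEvent G x R ∩ ballInfEvent G y R)ᶜ ≤ 1/2 := by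
      rw [Set.compl_inter]
      refine le_trans (measure_union_le _ _) ?_
      calc μ (ballInfEvent G x R)ᶜ + μ (ballInfEvent G y R)ᶜ ≤ 1/4 + 1/4 :=
            add_le_add hcx hcy
        _ = 1/2 := by
            rw [ENNReal.div_add_div_same,
              ENNReal.div_eq_div_iff (by norm_num) (by norm_num) (by norm_num) (by norm_num)]
            norm_num
    have heq : μ (ballInfEvent G x R ∩ ballInfEvent G y R)
        = 1 - μ (ballInfEvent G x R ∩ ballInfEvent G y R)ᶜ := by
      refine (ENNReal.eq_sub_of_add_eq (measure_ne_top μ _) ?_)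
      rw [measure_add_measure_compl (hmeasx.inter hmeasy)]
      exact measure_univ
    rw [heq]
    have hhalf : (1:ℝ≥0∞) - 1/2 = 1/2 := by
      refine ENNReal.sub_eq_of_eq_add (by norm_num) ?_
      rw [ENNReal.div_add_div_same]
      norm_num [ENNReal.div_self]
    calc (1/2 : ℝ≥0∞) = 1 - 1/2 := hhalf.symm
      _ ≤ 1 - μ (ballInfEvent G x R ∩ ballInfEvent G y R)ᶜ := tsub_le_tsub_left hcup 1
  have hcover : ballInfEvent G x R ∩ ballInfEvent G y R ⊆
      ⋃ uv ∈ I, ({ω : G.edgeSet → Bool | (cluster G ω uv.1).Infinite}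
        ∩ {ω : G.edgeSet → Bool | (cluster G ω uv.2).Infinite}) := by
    rintro ω ⟨hx1, hy1⟩
    simp only [ballInfEvent, Set.mem_iUnion, Set.mem_setOf_eq] at hx1 hy1
    obtain ⟨u, hu, hiu⟩ := hx1
    obtain ⟨v, hv, hiv⟩ := hy1
    have huv : (u, v) ∈ I := by
      rw [hI, Finset.mem_product]
      exact ⟨hfx.mem_toFinset.mpr hu, hfy.mem_toFinset.mpr hv⟩
    exact Set.mem_biUnion huv ⟨hiu, hiv⟩
  have hIne : I.Nonempty :=
    ⟨(x, y), by
      rw [hI, Finset.mem_product]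
      exact ⟨hfx.mem_toFinset.mpr (mem_ball_self G x R),
        hfy.mem_toFinset.mpr (mem_ball_self G y R)⟩⟩
  obtain ⟨⟨u, v⟩, huvI, hmax⟩ := Finset.exists_max_image I g hIne
  have huB : u ∈ ball G x R := hfx.mem_toFinset.mp (Finset.mem_product.mp huvI).1
  have hvB : v ∈ ball G y R := hfy.mem_toFinset.mp (Finset.mem_product.mp huvI).2
  have hIcard : (I.card : ℝ≥0∞) ≤ (N : ℝ≥0∞) ^ 2 := by
    have h1 : I.card ≤ N * N := by
      rw [hI, Finset.card_product]
      refine Nat.mul_le_mul ?_ ?_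
      · rw [← Set.ncard_eq_toFinset_card (ball G x R) hfx]
        exact hNx x
      · rw [← Set.ncard_eq_toFinset_card (ball G y R) hfy]
        exact hNx y
    calc (I.card : ℝ≥0∞) ≤ ((N * N : ℕ) : ℝ≥0∞) := Nat.cast_le.mpr h1
      _ = (N : ℝ≥0∞) ^ 2 := by push_cast; ring
  have hmge : ((3 : ℝ≥0∞) * (N : ℝ≥0∞) ^ 2)⁻¹ ≤ g (u, v) := by
    by_contra hcon
    push_neg at hcon
    have hsum : (1/2 : ℝ≥0∞) ≤ ∑ uv ∈ I, g uv :=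
      le_trans hcap (le_trans (measure_mono hcover) (measure_biUnion_finset_le I _))
    have hsum2 : ∑ uv ∈ I, g uv ≤ I.card • g (u, v) :=
      Finset.sum_le_card_nsmul I g _ fun uv huv => hmax uv huv
    have hsum3 : (I.card : ℝ≥0∞) * g (u, v)
        ≤ (N : ℝ≥0∞) ^ 2 * ((3 : ℝ≥0∞) * (N : ℝ≥0∞) ^ 2)⁻¹ :=
      mul_le_mul' hIcard (le_of_lt hcon)
    have hfrac : (N : ℝ≥0∞) ^ 2 * ((3 : ℝ≥0∞) * (N : ℝ≥0∞) ^ 2)⁻¹ ≤ 3⁻¹ := by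
      rw [ENNReal.mul_inv (Or.inl (by norm_num)) (Or.inl (by norm_num))]
      calc (N : ℝ≥0∞) ^ 2 * (3⁻¹ * ((N : ℝ≥0∞) ^ 2)⁻¹)
          = 3⁻¹ * ((N : ℝ≥0∞) ^ 2 * ((N : ℝ≥0∞) ^ 2)⁻¹) := by ring
        _ ≤ 3⁻¹ * 1 := mul_le_mul_right (ENNReal.mul_inv_le_one _) _
        _ = 3⁻¹ := mul_one _
    have hcontr : (1/2 : ℝ≥0∞) ≤ 3⁻¹ := by
      calc (1/2 : ℝ≥0∞) ≤ ∑ uv ∈ I, g uv := hsum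
        _ ≤ (I.card : ℝ≥0∞) * g (u, v) := by rw [← nsmul_eq_mul]; exact hsum2
        _ ≤ (N : ℝ≥0∞) ^ 2 * ((3 : ℝ≥0∞) * (N : ℝ≥0∞) ^ 2)⁻¹ := hsum3
        _ ≤ 3⁻¹ := hfrac
    norm_num at hcontr
  -- the best pair is connected with good probability
  have hconnuv : ((3 : ℝ≥0∞) * (N : ℝ≥0∞) ^ 2)⁻¹ ≤ μ (connEvent G u v) := by
    have hAmeas : MeasurableSet ({ω : G.edgeSet → Bool | (cluster G ω u).Infinite}
        ∩ {ω : G.edgeSet → Bool | (cluster G ω v).Infinite}) :=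
      (measurableSet_infCluster G hconn hlf u).inter (measurableSet_infCluster G hconn hlf v)
    calc ((3 : ℝ≥0∞) * (N : ℝ≥0∞) ^ 2)⁻¹ ≤ g (u, v) := hmge
      _ ≤ μ (({ω : G.edgeSet → Bool | (cluster G ω u).Infinite}
            ∩ {ω : G.edgeSet → Bool | (cluster G ω v).Infinite})
            ∩ {ω : G.edgeSet → Bool | UniqueInfiniteCluster G ω}) :=
          measure_le_measure_inter_ae hAmeas hunique
      _ ≤ μ (connEvent G u v) := measure_mono (infEvent_inter_unique_subset_connEvent u v)
  -- insertion of two geodesics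
  obtain ⟨w₁, hw₁⟩ := hconn.exists_walk_length_eq_dist x u
  obtain ⟨w₂, hw₂⟩ := hconn.exists_walk_length_eq_dist y v
  have hw₁len : w₁.length ≤ R := by rw [hw₁]; exact huB
  have hw₂len : w₂.length ≤ R := by rw [hw₂]; exact hvB
  set l : List (Sym2 V) := w₁.edges ++ w₂.edges with hl
  set F : Finset G.edgeSet := l.toFinset.subtype (· ∈ G.edgeSet) with hF
  have hmemF : ∀ (e : Sym2 V) (he : e ∈ G.edgeSet), e ∈ l → (⟨e, he⟩ : G.edgeSet) ∈ F := by
    intro e he hel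
    rw [hF, Finset.mem_subtype]
    exact List.mem_toFinset.mpr hel
  have hFcard : F.card ≤ 2 * R := by
    calc F.card ≤ l.toFinset.card := by
          rw [hF, Finset.card_subtype]
          exact Finset.card_filter_le _ _
      _ ≤ l.length := l.toFinset_card_le
      _ = w₁.length + w₂.length := by
          rw [hl, List.length_append, SimpleGraph.Walk.length_edges,
            SimpleGraph.Walk.length_edges]
      _ ≤ 2 * R := by omega
  set C' : Set (G.edgeSet → Bool) := forceOpen G F ⁻¹' connEvent G u v with hC'
  have hC'meas : MeasurableSet C' := measurable_forceOpen F (measurableSet_connEvent G u v)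
  have hins : forceOpen G F ⁻¹' C' = C' := by
    ext ω
    simp only [hC', Set.mem_preimage, forceOpen_idem]
  have hCC' : connEvent G u v ⊆ C' := by
    intro ω hω
    simp only [hC', Set.mem_preimage, connEvent, Set.mem_setOf_eq] at hω ⊢
    refine hω.mono ?_
    intro a b hab
    rw [openSubgraph, SimpleGraph.fromEdgeSet_adj] at hab ⊢
    obtain ⟨⟨he, het⟩, hne⟩ := hab
    refine ⟨⟨he, ?_⟩, hne⟩
    rw [forceOpen]
    split_ifs with h
    · rfl
    · exact het
  have hopen_sub : pointCyl G F (fun _ => true) ∩ C' ⊆ connEvent G x y := by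
    rintro ω ⟨hF1, hC1⟩
    have heq : forceOpen G F ω = ω := by
      funext e
      rw [forceOpen]
      split_ifs with h
      · exact (hF1 e h).symm
      · rfl
    have hCuv : (openSubgraph G ω).Reachable u v := by
      have := hC1
      simp only [hC', Set.mem_preimage, heq] at this
      exact this
    have hxu : (openSubgraph G ω).Reachable x u := by
      rw [reachable_open_iff]
      refine ⟨w₁, fun e he => ?_⟩
      have heG : e ∈ G.edgeSet := w₁.edges_subset_edgeSet he
      exact ⟨heG, hF1 _ (hmemF e heG (by rw [hl]; exact List.mem_append_left _ he))⟩
    have hyv : (openSubgraph G ω).Reachable y v := by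
      rw [reachable_open_iff]
      refine ⟨w₂, fun e he => ?_⟩
      have heG : e ∈ G.edgeSet := w₂.edges_subset_edgeSet he
      exact ⟨heG, hF1 _ (hmemF e heG (by rw [hl]; exact List.mem_append_right _ he))⟩
    exact hxu.trans (hCuv.trans hyv.symm)
  have hfinal : c₀ ≤ μ (connEvent G x y) := by
    calc c₀ = q ^ (2 * R) * ((3 : ℝ≥0∞) * (N : ℝ≥0∞) ^ 2)⁻¹ := hc₀
      _ ≤ q ^ F.card * μ C' := by
          refine mul_le_mul' (pow_le_pow_of_le_one zero_le hq1 hFcard) ?_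
          exact le_trans hconnuv (measure_mono hCC')
      _ = μ (pointCyl G F (fun _ => true) ∩ C') := (hμ.measure_open_inter F hC'meas hins).symm
      _ ≤ μ (connEvent G x y) := measure_mono hopen_sub
  have := ENNReal.toReal_mono (measure_ne_top μ _) hfinal
  exact this

end CoreAux

-- FINAL SECTION

/-- On a connected, locally finite, quasi-transitive graph, if `G[p]` has a
unique infinite cluster almost surely, then the two-point function is bounded away from
zero, and in particular `lim_{n→∞} κ_p(n) > 0`. -/
theorem twoPoint_bounded_away_of_unique_infinite_cluster
    {V : Type*} (G : SimpleGraph V)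
    (hconn : G.Connected) (hlf : ∀ v : V, (G.neighborSet v).Finite)
    (hqt : QuasiTransitive G)
    (p : ℝ) (hp : p ∈ Set.Icc (0:ℝ) 1)
    (μ : Measure (G.edgeSet → Bool)) (hμ : IsBernoulli G p μ)
    (hunique : μ {ω | UniqueInfiniteCluster G ω} = 1) :
    0 < sInf {t : ℝ | ∃ x y : V, t = tau G μ x y} ∧
      ∃ L : ℝ, 0 < L ∧ Filter.Tendsto (fun n : ℕ => kappa G μ n) Filter.atTop (𝓝 L) := by
  obtain ⟨c, hc, hbound⟩ := exists_tau_lower_bound hconn hlf hqt hp hμ hunique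
  obtain ⟨x₀⟩ := hconn.nonempty
  constructor
  · have hne : {t : ℝ | ∃ x y : V, t = tau G μ x y}.Nonempty := ⟨tau G μ x₀ x₀, x₀, x₀, rfl⟩
    have hlb : ∀ t ∈ {t : ℝ | ∃ x y : V, t = tau G μ x y}, c ≤ t := by
      rintro t ⟨x, y, rfl⟩
      exact hbound x y
    exact lt_of_lt_of_le hc (le_csInf hne hlb)
  · have hKne : ∀ n : ℕ, {t : ℝ | ∃ x y : V, G.dist x y ≤ n ∧ t = tau G μ x y}.Nonempty :=
      fun n => ⟨tau G μ x₀ x₀, x₀, x₀, by simp [SimpleGraph.dist_self], rfl⟩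
    have hKlb : ∀ n : ℕ, ∀ t ∈ {t : ℝ | ∃ x y : V, G.dist x y ≤ n ∧ t = tau G μ x y}, c ≤ t := by
      rintro n t ⟨x, y, -, rfl⟩
      exact hbound x y
    have hbddb : ∀ n : ℕ, c ≤ kappa G μ n := fun n => le_csInf (hKne n) (hKlb n)
    have hanti : Antitone (fun n : ℕ => kappa G μ n) := by
      intro a b hab
      refine csInf_le_csInf ⟨c, hKlb b⟩ (hKne a) ?_
      rintro t ⟨x, y, hxy, rfl⟩
      exact ⟨x, y, le_trans hxy hab, rfl⟩
    refine ⟨⨅ n : ℕ, kappa G μ n, lt_of_lt_of_le hc (le_ciInf hbddb),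
      tendsto_atTop_ciInf hanti ⟨c, ?_⟩⟩
    rintro t ⟨n, rfl⟩
    exact hbddb n

end BernoulliPercolation
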